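/- Assume γ, K, z, B, W > 0 with 0 < W ≤ B and γ·(K/2)·z² ≤ 1, and let P > 0. Define R₁(q) = 4·[K·z + (√q + δ)²]·[ (2·(W/B)/√((κ/8)·q))·(√π/2)·erf(√((κ/8)·q)) + 5·exp(−√(γ·K·z²) − (κ/9)·q) ] for q > 0, and c₁ = 20·[K·z + δ² + √(18/(κ·e))·δ + 9/(κ·e)]·exp(−√(γ·K·z²)). Then: (i) R₁(q) ≤ c₁ + 8·(W/B)·f(κ/8, q + P_o) for all q > 0; (ii) the map P ↦ c₁ + 8·(W/B)·f(κ/8, P + P_o) is nondecreasing and concave on (0, ∞); and (iii) for every random variable Π with Π > 0 almost surely and E[Π] ≤ P, E[R₁(Π)] ≤ c₁ + 8·(W/B)·f(κ/8, P + P_o). -/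

import Mathlib

open MeasureTheory

/-- The error function `erf(y) = (2/√π)·∫₀^y e^{−u²} du`. -/
noncomputable def erf (y : ℝ) : ℝ := (2 / Real.sqrt Real.pi) * ∫ u in (0:ℝ)..y, Real.exp (-u ^ 2)

/-- `δ = √(3Kz/(4e))`. -/
noncomputable def dlt (K z : ℝ) : ℝ := Real.sqrt (3 * K * z / (4 * Real.exp 1))

/-- `f(s,P) = [K·z + (√P + δ)²]·(√π/2)·erf(√(s·P))/√(s·P)`. -/
noncomputable def ffun (K z s P : ℝ) : ℝ :=
  (K * z + (Real.sqrt P + dlt K z) ^ 2) * (Real.sqrt Real.pi / 2) *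
    erf (Real.sqrt (s * P)) / Real.sqrt (s * P)

/-!
With `x = √(s P)`, `f(s, P) = (K z + (√P + δ)²) · m₀(x)`, where
`mₙ(x) = x^{-(2n+1)} ∫₀ˣ t^{2n} e^{-t²} dt = ∫₀¹ u^{2n} e^{-x²u²} du`.
Integration by parts gives `mₙ' = -2x·mₙ₊₁` and `m₀ - 2x²m₁ = e^{-x²}`, so the `P`-derivative of `f`
collapses to `½(m₀ - 2s(Kz + δ²)m₁)(x) + (½ + δ/√P) e^{-sP}`. As `mₙ₊₁ ≤ mₙ`, in the low regime
`2s(Kz + δ²) ≤ 1` this is nonnegative and decreasing, so `f(s, ·)` is nondecreasing and concave.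
Part (i) splits `R₁` into `8(W/B) f(κ/8, q)` and an exponential tail, bounded by `c₁` through
`q e^{-bq} ≤ 1/(b e)`; part (iii) is Jensen's inequality, the concave majorant being integrable
because it grows at most linearly.
-/

open Real Set

noncomputable def gaussMoment (n : ℕ) (x : ℝ) : ℝ := ∫ t in (0:ℝ)..x, t ^ (2 * n) * exp (-t ^ 2)

lemma continuous_gaussMoment_integrand (n : ℕ) :
    Continuous fun t : ℝ => t ^ (2 * n) * exp (-t ^ 2) := by fun_prop

lemma hasDerivAt_gaussMoment (n : ℕ) (x : ℝ) :
    HasDerivAt (gaussMoment n) (x ^ (2 * n) * exp (-x ^ 2)) x :=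
  (continuous_gaussMoment_integrand n).integral_hasStrictDerivAt 0 x |>.hasDerivAt

lemma gaussMoment_nonneg (n : ℕ) {x : ℝ} (hx : 0 ≤ x) : 0 ≤ gaussMoment n x :=
  intervalIntegral.integral_nonneg hx fun t ht => by have := ht.1; positivity

lemma gaussMoment_succ_le (n : ℕ) {x : ℝ} (hx : 0 ≤ x) :
    gaussMoment (n + 1) x ≤ x ^ 2 * gaussMoment n x := by
  rw [gaussMoment, gaussMoment, ← intervalIntegral.integral_const_mul]
  refine intervalIntegral.integral_mono_on hx
    ((continuous_gaussMoment_integrand _).intervalIntegrable _ _)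
    ((continuous_const.mul (continuous_gaussMoment_integrand n)).intervalIntegrable _ _) ?_
  rintro t ⟨ht0, htx⟩
  have : t ^ 2 ≤ x ^ 2 := pow_le_pow_left₀ ht0 htx 2
  calc t ^ (2 * (n + 1)) * exp (-t ^ 2) = t ^ 2 * (t ^ (2 * n) * exp (-t ^ 2)) := by ring
    _ ≤ x ^ 2 * (t ^ (2 * n) * exp (-t ^ 2)) := by gcongr

lemma gaussMoment_succ (n : ℕ) (x : ℝ) :
    2 * gaussMoment (n + 1) x = (2 * n + 1) * gaussMoment n x - x ^ (2 * n + 1) * exp (-x ^ 2) := by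
  have hderiv : ∀ t : ℝ, HasDerivAt (fun t : ℝ => t ^ (2 * n + 1) * exp (-t ^ 2))
      ((2 * n + 1) * (t ^ (2 * n) * exp (-t ^ 2)) - 2 * (t ^ (2 * (n + 1)) * exp (-t ^ 2))) t := by
    intro t
    refine ((hasDerivAt_pow (2 * n + 1) t).mul (hasDerivAt_pow 2 t).neg.exp).congr_deriv ?_
    simp only [Pi.neg_apply, Nat.add_sub_cancel, Nat.cast_add, Nat.cast_mul, Nat.cast_ofNat,
      Nat.cast_one]
    ring
  have hint : ∀ k, IntervalIntegrable (fun t : ℝ => t ^ (2 * k) * exp (-t ^ 2)) volume 0 x :=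
    fun k => (continuous_gaussMoment_integrand k).intervalIntegrable _ _
  have hftc := intervalIntegral.integral_eq_sub_of_hasDerivAt (fun t _ => hderiv t)
    (((hint n).const_mul _).sub ((hint (n + 1)).const_mul _))
  rw [intervalIntegral.integral_sub ((hint n).const_mul _) ((hint (n + 1)).const_mul _),
    intervalIntegral.integral_const_mul, intervalIntegral.integral_const_mul,
    zero_pow (Nat.succ_ne_zero _), zero_mul, sub_zero] at hftc
  rw [gaussMoment, gaussMoment]
  linarith

noncomputable def gaussMomentRatio (n : ℕ) (x : ℝ) : ℝ := gaussMoment n x / x ^ (2 * n + 1)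

lemma hasDerivAt_gaussMomentRatio (n : ℕ) {x : ℝ} (hx : x ≠ 0) :
    HasDerivAt (gaussMomentRatio n) (-2 * x * gaussMomentRatio (n + 1) x) x := by
  refine ((hasDerivAt_gaussMoment n x).div (hasDerivAt_pow _ x) (pow_ne_zero _ hx)).congr_deriv ?_
  have := gaussMoment_succ n x
  rw [gaussMomentRatio, Nat.add_sub_cancel]
  field_simp
  push_cast
  linear_combination x * (x ^ (2 * n + 1)) ^ 2 * this

lemma gaussMomentRatio_nonneg (n : ℕ) {x : ℝ} (hx : 0 ≤ x) : 0 ≤ gaussMomentRatio n x :=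
  div_nonneg (gaussMoment_nonneg n hx) (by positivity)

lemma gaussMomentRatio_succ_le (n : ℕ) {x : ℝ} (hx : 0 < x) :
    gaussMomentRatio (n + 1) x ≤ gaussMomentRatio n x := by
  rw [gaussMomentRatio, gaussMomentRatio, div_le_div_iff₀ (by positivity) (by positivity)]
  calc gaussMoment (n + 1) x * x ^ (2 * n + 1)
      ≤ x ^ 2 * gaussMoment n x * x ^ (2 * n + 1) := by
        gcongr; exact gaussMoment_succ_le n hx.le
    _ = gaussMoment n x * x ^ (2 * (n + 1) + 1) := by ring

lemma gaussMomentRatio_zero_sub {x : ℝ} (hx : x ≠ 0) :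
    gaussMomentRatio 0 x - 2 * x ^ 2 * gaussMomentRatio 1 x = exp (-x ^ 2) := by
  have := gaussMoment_succ 0 x
  simp only [gaussMomentRatio]
  field_simp
  push_cast at this ⊢
  linear_combination (-x ^ 3) * this

lemma antitoneOn_gaussMomentRatio_zero_sub {c : ℝ} (hc : c ≤ 1) :
    AntitoneOn (fun x => gaussMomentRatio 0 x - c * gaussMomentRatio 1 x) (Ioi 0) := by
  have hderiv : ∀ x ∈ Ioi (0 : ℝ),
      HasDerivAt (fun x => gaussMomentRatio 0 x - c * gaussMomentRatio 1 x)
        (-2 * x * (gaussMomentRatio 1 x - c * gaussMomentRatio 2 x)) x := fun x hx =>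
    ((hasDerivAt_gaussMomentRatio 0 hx.ne').sub
      ((hasDerivAt_gaussMomentRatio 1 hx.ne').const_mul c)).congr_deriv (by ring)
  refine antitoneOn_of_hasDerivWithinAt_nonpos (convex_Ioi 0)
    (fun x hx => (hderiv x hx).continuousAt.continuousWithinAt)
    (fun x hx => (hderiv x (interior_subset hx)).hasDerivWithinAt) fun x hx => ?_
  rw [interior_Ioi] at hx
  have h2 := gaussMomentRatio_nonneg 2 hx.le
  have h21 := gaussMomentRatio_succ_le 1 hx
  have : c * gaussMomentRatio 2 x ≤ gaussMomentRatio 1 x := by nlinarith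
  nlinarith [mem_Ioi.mp hx]

lemma concaveOn_of_hasDerivAt_of_antitoneOn {D : Set ℝ} (hD : Convex ℝ D) (hDo : IsOpen D)
    {f f' : ℝ → ℝ} (hf : ∀ x ∈ D, HasDerivAt f (f' x) x) (hf' : AntitoneOn f' D) :
    ConcaveOn ℝ D f := by
  refine AntitoneOn.concaveOn_of_deriv hD (fun x hx => (hf x hx).continuousAt.continuousWithinAt)
    ?_ ?_ <;> rw [hDo.interior_eq]
  · exact fun x hx => (hf x hx).differentiableAt.differentiableWithinAt
  · exact hf'.congr fun x hx => ((hf x hx).deriv).symm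

noncomputable def gaussProfile (a δ s P : ℝ) : ℝ :=
  (a + (√P + δ) ^ 2) * gaussMomentRatio 0 √(s * P)

lemma gaussProfile_nonneg {a : ℝ} (ha : 0 ≤ a) (δ s P : ℝ) : 0 ≤ gaussProfile a δ s P :=
  mul_nonneg (by positivity) (gaussMomentRatio_nonneg 0 (sqrt_nonneg _))

noncomputable def gaussProfileSlope (a δ s P : ℝ) : ℝ :=
  (gaussMomentRatio 0 √(s * P) - 2 * s * (a + δ ^ 2) * gaussMomentRatio 1 √(s * P)) / 2 +
    (1 / 2 + δ / √P) * exp (-(s * P))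

lemma hasDerivAt_gaussProfile (a δ : ℝ) {s P : ℝ} (hs : 0 < s) (hP : 0 < P) :
    HasDerivAt (gaussProfile a δ s) (gaussProfileSlope a δ s P) P := by
  have hsP : 0 < s * P := mul_pos hs hP
  have hx : 0 < √(s * P) := sqrt_pos.2 hsP
  have hr : 0 < √P := sqrt_pos.2 hP
  have hratio : HasDerivAt (fun P => gaussMomentRatio 0 √(s * P))
      (-2 * √(s * P) * gaussMomentRatio 1 √(s * P) * (1 / (2 * √(s * P)) * (s * 1))) P := by
    have h := (hasDerivAt_gaussMomentRatio 0 hx.ne').comp P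
      ((hasDerivAt_sqrt hsP.ne').comp P ((hasDerivAt_id P).const_mul s))
    exact h
  have hfactor : HasDerivAt (fun P => a + (√P + δ) ^ 2) (2 * (√P + δ) * (1 / (2 * √P))) P := by
    simpa using (((hasDerivAt_sqrt hP.ne').add_const δ).pow 2).const_add a
  refine (hfactor.mul hratio).congr_deriv ?_
  have hid := gaussMomentRatio_zero_sub hx.ne'
  rw [sq_sqrt hsP.le] at hid
  rw [gaussProfileSlope, ← hid]
  field_simp
  linear_combination (-(2 * s * √P + 4 * s * δ) * gaussMomentRatio 1 √(s * P)) * sq_sqrt hP.le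

section Slope

variable {a δ s : ℝ} (hs : 0 < s) (hA : 2 * s * (a + δ ^ 2) ≤ 1)
include hs hA

lemma gaussProfileSlope_nonneg (hδ : 0 ≤ δ) {P : ℝ} (hP : 0 < P) :
    0 ≤ gaussProfileSlope a δ s P := by
  have hx : 0 < √(s * P) := sqrt_pos.2 (mul_pos hs hP)
  have h1 := gaussMomentRatio_nonneg 1 hx.le
  have h10 := gaussMomentRatio_succ_le 0 hx
  have : 0 ≤ gaussMomentRatio 0 √(s * P) - 2 * s * (a + δ ^ 2) * gaussMomentRatio 1 √(s * P) := by
    nlinarith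
  rw [gaussProfileSlope]
  positivity

lemma antitoneOn_gaussProfileSlope (hδ : 0 ≤ δ) :
    AntitoneOn (gaussProfileSlope a δ s) (Ioi 0) := by
  intro P hP Q hQ hPQ
  have hmoment := antitoneOn_gaussMomentRatio_zero_sub hA (sqrt_pos.2 (mul_pos hs hP))
    (sqrt_pos.2 (mul_pos hs hQ)) (sqrt_le_sqrt (by gcongr))
  have hfactor : 1 / 2 + δ / √Q ≤ 1 / 2 + δ / √P := by
    have := sqrt_pos.2 hP; gcongr
  have hexp : exp (-(s * Q)) ≤ exp (-(s * P)) := by gcongr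
  exact add_le_add (div_le_div_of_nonneg_right hmoment zero_le_two)
    (mul_le_mul hfactor hexp (exp_pos _).le (by positivity))

lemma monotoneOn_gaussProfile (hδ : 0 ≤ δ) : MonotoneOn (gaussProfile a δ s) (Ioi 0) :=
  monotoneOn_of_hasDerivWithinAt_nonneg (convex_Ioi 0)
    (fun _ hP => (hasDerivAt_gaussProfile a δ hs hP).continuousAt.continuousWithinAt)
    (fun _ hP => (hasDerivAt_gaussProfile a δ hs (interior_subset hP)).hasDerivWithinAt)
    (fun _ hP => gaussProfileSlope_nonneg hs hA hδ (interior_subset hP))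

lemma concaveOn_gaussProfile (hδ : 0 ≤ δ) : ConcaveOn ℝ (Ioi 0) (gaussProfile a δ s) :=
  concaveOn_of_hasDerivAt_of_antitoneOn (convex_Ioi 0) isOpen_Ioi
    (fun _ hP => hasDerivAt_gaussProfile a δ hs hP) (antitoneOn_gaussProfileSlope hs hA hδ)

end Slope

lemma ffun_eq_gaussProfile (K z s : ℝ) : ffun K z s = gaussProfile (K * z) (dlt K z) s := by
  have hπ : √π ≠ 0 := (sqrt_pos.2 pi_pos).ne'
  ext P
  simp only [ffun, gaussProfile, erf, gaussMomentRatio, gaussMoment, mul_zero, pow_zero, one_mul,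
    zero_add, pow_one]
  field_simp

lemma add_sqrt_add_sq_mul_exp_neg_le {a δ b q : ℝ} (ha : 0 ≤ a) (hδ : 0 ≤ δ) (hb : 0 < b)
    (hq : 0 ≤ q) :
    (a + (√q + δ) ^ 2) * exp (-(b * q)) ≤ a + δ ^ 2 + √(2 / (b * exp 1)) * δ + 1 / (b * exp 1) := by
  have hlinear : ∀ c > 0, q * exp (-(c * q)) ≤ 1 / (c * exp 1) := fun c hc => by
    have := mul_exp_neg_le_exp_neg_one (c * q)
    calc q * exp (-(c * q)) = c * q * exp (-(c * q)) / c := by field_simp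
      _ ≤ exp (-1) / c := by gcongr
      _ = 1 / (c * exp 1) := by rw [exp_neg]; field_simp
  have hexp_le : exp (-(b * q)) ≤ 1 := exp_le_one_iff.2 (neg_nonpos.2 (mul_nonneg hb.le hq))
  have hsqrt : √q * exp (-(b * q)) ≤ √(2 / (b * exp 1)) / 2 := by
    refine le_of_pow_le_pow_left₀ two_ne_zero (by positivity) ?_
    calc (√q * exp (-(b * q))) ^ 2 = q * exp (-((2 * b) * q)) := by
          rw [mul_pow, sq_sqrt hq, ← exp_nat_mul]; ring_nf
      _ ≤ 1 / ((2 * b) * exp 1) := hlinear _ (by positivity)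
      _ = (√(2 / (b * exp 1)) / 2) ^ 2 := by
          rw [div_pow, sq_sqrt (by positivity)]; field_simp
  have := hlinear b hb
  have hq' := sq_sqrt hq
  nlinarith [exp_pos (-(b * q))]

section Jensen

variable {Φ : ℝ → ℝ} (hΦc : ConcaveOn ℝ (Ici 0) Φ) (hΦm : MonotoneOn Φ (Ici 0))
include hΦc hΦm

lemma ConcaveOn.le_add_mul_of_monotoneOn {q : ℝ} (hq : 0 ≤ q) :
    Φ q ≤ Φ 1 + (Φ 1 - Φ 0) * q := by
  have hΦ01 : Φ 0 ≤ Φ 1 := hΦm self_mem_Ici (mem_Ici.2 zero_le_one) zero_le_one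
  rcases le_or_gt q 1 with hq1 | hq1
  · nlinarith [hΦm hq (mem_Ici.2 zero_le_one) hq1]
  · have hslope := hΦc.slope_anti_adjacent self_mem_Ici hq zero_lt_one hq1
    rw [div_le_iff₀ (by linarith), sub_zero, div_one] at hslope
    nlinarith

variable {Ω : Type*} [MeasurableSpace Ω] {μ : Measure Ω} {X : Ω → ℝ}
  (hΦcont : ContinuousOn Φ (Ici 0)) (hX : ∀ᵐ ω ∂μ, 0 ≤ X ω) (hXi : Integrable X μ)
include hΦcont hX hXi

lemma integrable_comp_of_concaveOn [IsFiniteMeasure μ] : Integrable (fun ω => Φ (X ω)) μ := by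
  have hmax : Continuous fun q => Φ (max q 0) :=
    hΦcont.comp_continuous (continuous_id.max continuous_const) fun q => le_max_right q 0
  have hmeas : AEStronglyMeasurable (fun ω => Φ (X ω)) μ :=
    (hmax.measurable.comp_aemeasurable hXi.aemeasurable).aestronglyMeasurable.congr
      (hX.mono fun ω hω => by simp only [Function.comp_apply, max_eq_left hω])
  refine ((integrable_const (|Φ 0| + |Φ 1|)).add (hXi.const_mul (Φ 1 - Φ 0))).mono' hmeas ?_
  filter_upwards [hX] with ω hω
  rw [Pi.add_apply, Real.norm_eq_abs, abs_le]
  have hupper := hΦc.le_add_mul_of_monotoneOn hΦm hω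
  have hlower := hΦm self_mem_Ici hω hω
  have hslope : 0 ≤ (Φ 1 - Φ 0) * X ω :=
    mul_nonneg (sub_nonneg.2 (hΦm self_mem_Ici (mem_Ici.2 zero_le_one) zero_le_one)) hω
  constructor <;>
    linarith [neg_abs_le (Φ 0), le_abs_self (Φ 1), abs_nonneg (Φ 0), abs_nonneg (Φ 1)]

theorem integral_le_of_le_concaveOn_comp [IsProbabilityMeasure μ] {Y : Ω → ℝ} {P : ℝ}
    (hXP : ∫ ω, X ω ∂μ ≤ P) (hY : ∀ᵐ ω ∂μ, 0 ≤ Y ω) (hYΦ : ∀ᵐ ω ∂μ, Y ω ≤ Φ (X ω)) :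
    ∫ ω, Y ω ∂μ ≤ Φ P := by
  have hint := integrable_comp_of_concaveOn hΦc hΦm hΦcont hX hXi
  have hmean : 0 ≤ ∫ ω, X ω ∂μ := integral_nonneg_of_ae hX
  calc ∫ ω, Y ω ∂μ ≤ ∫ ω, Φ (X ω) ∂μ := integral_mono_of_nonneg hY hint hYΦ
    _ ≤ Φ (∫ ω, X ω ∂μ) := hΦc.le_map_integral hΦcont isClosed_Ici hX hXi hint
    _ ≤ Φ P := hΦm hmean (hmean.trans hXP) hXP

end Jensen

lemma dlt_sq_le {K z : ℝ} (hK : 0 ≤ K) (hz : 0 ≤ z) : dlt K z ^ 2 ≤ K * z / 2 := by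
  rw [dlt, sq_sqrt (by positivity), div_le_div_iff₀ (by positivity) two_pos]
  nlinarith [mul_nonneg (mul_nonneg hK hz) (by linarith [exp_one_gt_d9] : (0:ℝ) ≤ 4 * exp 1 - 6)]

lemma monotoneOn_const_add_mul_comp_add {f : ℝ → ℝ} (hf : MonotoneOn f (Ioi 0)) (c : ℝ) {l : ℝ}
    (hl : 0 ≤ l) (p : ℝ) : MonotoneOn (fun x => c + l * f (x + p)) (Ioi (-p)) := by
  intro x hx y hy hxy
  have := hf (show 0 < x + p by linarith [mem_Ioi.1 hx])
    (show 0 < y + p by linarith [mem_Ioi.1 hy]) (by linarith)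
  simp only
  gcongr

lemma concaveOn_const_add_mul_comp_add {f : ℝ → ℝ} (hf : ConcaveOn ℝ (Ioi 0) f) (c : ℝ) {l : ℝ}
    (hl : 0 ≤ l) (p : ℝ) : ConcaveOn ℝ (Ioi (-p)) (fun x => c + l * f (x + p)) := by
  refine ⟨convex_Ioi _, fun x hx y hy a b ha hb hab => ?_⟩
  have key := hf.2 (show 0 < x + p by linarith [mem_Ioi.1 hx])
    (show 0 < y + p by linarith [mem_Ioi.1 hy]) ha hb hab
  have harg : a • (x + p) + b • (y + p) = a • x + b • y + p := by
    simp only [smul_eq_mul]; linear_combination p * hab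
  rw [harg] at key
  simp only [smul_eq_mul] at key ⊢
  linear_combination l * key + c * hab

theorem average_power_bound_low_general
    {Ω : Type*} [MeasureSpace Ω] [IsProbabilityMeasure (volume : Measure Ω)]
    (γ K z B W P : ℝ)
    (hγ : 0 < γ) (hK : 0 < K) (hz : 0 < z) (hB : 0 < B) (hW : 0 < W)
    (hlow : γ * (K / 2) * z ^ 2 ≤ 1)
    (κ δ Po c₁ : ℝ)
    (hκ : κ = 2 * γ ^ 2 * K * z ^ 3 / 3)
    (hδ : δ = Real.sqrt (3 * K * z / (4 * Real.exp 1)))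
    (hPo : Po = 3 * (K * z + δ ^ 2))
    (hc₁ : c₁ = 20 * (K * z + δ ^ 2 + Real.sqrt (18 / (κ * Real.exp 1)) * δ +
      9 / (κ * Real.exp 1)) * Real.exp (-Real.sqrt (γ * K * z ^ 2)))
    (R₁ : ℝ → ℝ)
    (hR₁ : ∀ q, 0 < q → R₁ q =
      4 * (K * z + (Real.sqrt q + δ) ^ 2) *
        ((2 * (W / B) / Real.sqrt ((κ / 8) * q)) * (Real.sqrt Real.pi / 2) *
            erf (Real.sqrt ((κ / 8) * q)) +
          5 * Real.exp (-Real.sqrt (γ * K * z ^ 2) - (κ / 9) * q)))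
    (Prand : Ω → ℝ) (hPrand_pos : ∀ᵐ ω : Ω, 0 < Prand ω) (hPrand_int : Integrable Prand)
    (hPrand_mean : ∫ ω, Prand ω ≤ P) :
    (∀ q, 0 < q → R₁ q ≤ c₁ + 8 * (W / B) * ffun K z (κ / 8) (q + Po)) ∧
    (MonotoneOn (fun P' => c₁ + 8 * (W / B) * ffun K z (κ / 8) (P' + Po)) (Set.Ioi (0:ℝ)) ∧
      ConcaveOn ℝ (Set.Ioi (0:ℝ)) (fun P' => c₁ + 8 * (W / B) * ffun K z (κ / 8) (P' + Po))) ∧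
    (∫ ω, R₁ (Prand ω)) ≤ c₁ + 8 * (W / B) * ffun K z (κ / 8) (P + Po) := by
  have hKz : 0 < K * z := mul_pos hK hz
  have hκ0 : 0 < κ := by rw [hκ]; positivity
  replace hδ : δ = dlt K z := hδ
  have hδ0 : 0 ≤ δ := hδ ▸ sqrt_nonneg _
  have hff : ffun K z (κ / 8) = gaussProfile (K * z) δ (κ / 8) := hδ ▸ ffun_eq_gaussProfile K z _
  have hA : 2 * (κ / 8) * (K * z + δ ^ 2) ≤ 1 := by
    have := hδ ▸ dlt_sq_le hK.le hz.le
    rw [hκ]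
    nlinarith [mul_pos (mul_pos hγ hKz) hz]
  have hWB : 0 ≤ 8 * (W / B) := by positivity
  have hΦmono := monotoneOn_const_add_mul_comp_add
    (hff ▸ monotoneOn_gaussProfile (by positivity) hA hδ0) c₁ hWB Po
  have hΦconc := concaveOn_const_add_mul_comp_add
    (hff ▸ concaveOn_gaussProfile (by positivity) hA hδ0) c₁ hWB Po
  have hPo0 : 0 < Po := by rw [hPo]; positivity
  have hsplit : ∀ q, 0 < q → R₁ q = 8 * (W / B) * ffun K z (κ / 8) q +
      20 * ((K * z + (√q + δ) ^ 2) * exp (-(κ / 9 * q))) * exp (-√(γ * K * z ^ 2)) := by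
    intro q hq
    rw [hR₁ q hq, ffun, ← hδ, sub_eq_add_neg, exp_add]
    ring
  have hbound : ∀ q, 0 < q → R₁ q ≤ c₁ + 8 * (W / B) * ffun K z (κ / 8) (q + Po) := by
    intro q hq
    have hexp := add_sqrt_add_sq_mul_exp_neg_le hKz.le hδ0 (by positivity : 0 < κ / 9) hq.le
    rw [show 2 / (κ / 9 * exp 1) = 18 / (κ * exp 1) by field_simp; ring,
      show 1 / (κ / 9 * exp 1) = 9 / (κ * exp 1) by field_simp] at hexp
    have hmono := hff ▸ monotoneOn_gaussProfile (by positivity) hA hδ0 hq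
      (show 0 < q + Po by linarith) (by linarith)
    rw [hsplit q hq, hc₁, add_comm]
    gcongr
  have hR₁_nonneg : ∀ q, 0 < q → 0 ≤ R₁ q := fun q hq => by
    rw [hsplit q hq, hff]
    have := gaussProfile_nonneg hKz.le δ (κ / 8) q
    positivity
  have hIoi : Ioi (0 : ℝ) ⊆ Ioi (-Po) := Ioi_subset_Ioi (by linarith)
  have hIci : Ici (0 : ℝ) ⊆ Ioi (-Po) := fun x hx => show -Po < x by linarith [mem_Ici.1 hx]
  refine ⟨hbound, ⟨hΦmono.mono hIoi, hΦconc.subset hIoi (convex_Ioi 0)⟩, ?_⟩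
  refine integral_le_of_le_concaveOn_comp (hΦconc.subset hIci (convex_Ici 0)) (hΦmono.mono hIci)
    (interior_Ioi (a := -Po) ▸ hΦconc.continuousOn_interior |>.mono hIci)
    (hPrand_pos.mono fun _ h => h.le) hPrand_int hPrand_mean ?_ ?_
  · filter_upwards [hPrand_pos] with ω hω using hR₁_nonneg _ hω
  · filter_upwards [hPrand_pos] with ω hω using hbound _ hω

theorem average_power_bound_low
    {Ω : Type*} [MeasureSpace Ω] [IsProbabilityMeasure (volume : Measure Ω)]
    (γ K z B W P : ℝ)
    (hγ : 0 < γ) (hK : 0 < K) (hz : 0 < z) (hB : 0 < B) (hW : 0 < W) (hP : 0 < P)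
    (hWB : W ≤ B) (hlow : γ * (K / 2) * z ^ 2 ≤ 1)
    (κ δ Po c₁ : ℝ)
    (hκ : κ = 2 * γ ^ 2 * K * z ^ 3 / 3)
    (hδ : δ = Real.sqrt (3 * K * z / (4 * Real.exp 1)))
    (hPo : Po = 3 * (K * z + δ ^ 2))
    (hc₁ : c₁ = 20 * (K * z + δ ^ 2 + Real.sqrt (18 / (κ * Real.exp 1)) * δ +
      9 / (κ * Real.exp 1)) * Real.exp (-Real.sqrt (γ * K * z ^ 2)))
    (R₁ : ℝ → ℝ)
    (hR₁ : ∀ q, 0 < q → R₁ q =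
      4 * (K * z + (Real.sqrt q + δ) ^ 2) *
        ((2 * (W / B) / Real.sqrt ((κ / 8) * q)) * (Real.sqrt Real.pi / 2) *
            erf (Real.sqrt ((κ / 8) * q)) +
          5 * Real.exp (-Real.sqrt (γ * K * z ^ 2) - (κ / 9) * q)))
    (Prand : Ω → ℝ) (hPrand_pos : ∀ᵐ ω : Ω, 0 < Prand ω) (hPrand_int : Integrable Prand)
    (hPrand_mean : ∫ ω, Prand ω ≤ P) :
    (∀ q, 0 < q → R₁ q ≤ c₁ + 8 * (W / B) * ffun K z (κ / 8) (q + Po)) ∧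
    (MonotoneOn (fun P' => c₁ + 8 * (W / B) * ffun K z (κ / 8) (P' + Po)) (Set.Ioi (0:ℝ)) ∧
      ConcaveOn ℝ (Set.Ioi (0:ℝ)) (fun P' => c₁ + 8 * (W / B) * ffun K z (κ / 8) (P' + Po))) ∧
    (∫ ω, R₁ (Prand ω)) ≤ c₁ + 8 * (W / B) * ffun K z (κ / 8) (P + Po) :=
  average_power_bound_low_general γ K z B W P hγ hK hz hB hW hlow κ δ Po c₁ hκ hδ hPo hc₁ R₁ hR₁
    Prand hPrand_pos hPrand_int hPrand_mean
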